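/- Let A be an isotropic subspace and L a Lagrangian subspace of H. Then ((L + A) ∩ A^⊥)^⊥ = (L ∩ A^⊥) + A; in particular, the orthogonal of (L + A) ∩ A^⊥ is contained in L + A. -/

import Mathlib

namespace LinearMap.BilinForm

lemma isRefl_of_antisymm {R M : Type*} [CommRing R] [AddCommGroup M] [Module R M]
    {B : LinearMap.BilinForm R M} (h : ∀ x y, B x y = -B y x) : B.IsRefl :=
  fun x y hxy => by rw [h, hxy, neg_zero]

theorem orthogonal_sup {R M : Type*} [CommSemiring R] [AddCommMonoid M] [Module R M]
    (B : LinearMap.BilinForm R M) (N N' : Submodule R M) :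
    B.orthogonal (N ⊔ N') = B.orthogonal N ⊓ B.orthogonal N' := by
  refine le_antisymm (le_inf (orthogonal_le le_sup_left) (orthogonal_le le_sup_right)) ?_
  rintro x ⟨hN, hN'⟩ _ hy
  obtain ⟨n, hn, n', hn', rfl⟩ := Submodule.mem_sup.mp hy
  simp [hN n hn, hN' n' hn']

theorem orthogonal_inf {K V : Type*} [Field K] [AddCommGroup V] [Module K V]
    [FiniteDimensional K V] {B : LinearMap.BilinForm K V} (hB : B.Nondegenerate) (hB₀ : B.IsRefl)
    (W W' : Submodule K V) :
    B.orthogonal (W ⊓ W') = B.orthogonal W ⊔ B.orthogonal W' := by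
  conv_lhs => rw [← orthogonal_orthogonal hB hB₀ W, ← orthogonal_orthogonal hB hB₀ W',
    ← orthogonal_sup, orthogonal_orthogonal hB hB₀]

end LinearMap.BilinForm

open LinearMap.BilinForm

theorem orthogonal_of_contraction_general
    {H : Type*} [AddCommGroup H] [Module ℝ H] [FiniteDimensional ℝ H]
    (ω : LinearMap.BilinForm ℝ H)
    (hanti : ∀ x y : H, ω x y = -ω y x)
    (hnd : ∀ x : H, (∀ y : H, ω x y = 0) → x = 0)
    (A L : Submodule ℝ H)
    (hL : L = LinearMap.BilinForm.orthogonal ω L) :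
    LinearMap.BilinForm.orthogonal ω ((L ⊔ A) ⊓ LinearMap.BilinForm.orthogonal ω A) =
        (L ⊓ LinearMap.BilinForm.orthogonal ω A) ⊔ A ∧
      LinearMap.BilinForm.orthogonal ω ((L ⊔ A) ⊓ LinearMap.BilinForm.orthogonal ω A) ≤
        L ⊔ A := by
  have hrefl : ω.IsRefl := isRefl_of_antisymm hanti
  have hndeg : ω.Nondegenerate := hrefl.nondegenerate_iff_separatingLeft.mpr hnd
  have heq : ω.orthogonal ((L ⊔ A) ⊓ ω.orthogonal A) = (L ⊓ ω.orthogonal A) ⊔ A := by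
    rw [orthogonal_inf hndeg hrefl, orthogonal_sup, ← hL, orthogonal_orthogonal hndeg hrefl]
  exact ⟨heq, heq ▸ sup_le_sup_right inf_le_left A⟩

/-- Let `A` be an isotropic subspace and `L` a Lagrangian subspace of a
finite-dimensional real symplectic space `(H, ω)`. Then
`((L + A) ∩ A^⊥)^⊥ = (L ∩ A^⊥) + A`; in particular, the orthogonal of `(L + A) ∩ A^⊥`
is contained in `L + A`. -/
theorem orthogonal_of_contraction
    {H : Type*} [AddCommGroup H] [Module ℝ H] [FiniteDimensional ℝ H]
    (ω : LinearMap.BilinForm ℝ H)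
    (hanti : ∀ x y : H, ω x y = -ω y x)
    (hnd : ∀ x : H, (∀ y : H, ω x y = 0) → x = 0)
    (A L : Submodule ℝ H)
    (hA : A ≤ LinearMap.BilinForm.orthogonal ω A)
    (hL : L = LinearMap.BilinForm.orthogonal ω L) :
    LinearMap.BilinForm.orthogonal ω ((L ⊔ A) ⊓ LinearMap.BilinForm.orthogonal ω A) =
        (L ⊓ LinearMap.BilinForm.orthogonal ω A) ⊔ A ∧
      LinearMap.BilinForm.orthogonal ω ((L ⊔ A) ⊓ LinearMap.BilinForm.orthogonal ω A) ≤
        L ⊔ A :=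
  orthogonal_of_contraction_general ω hanti hnd A L hL
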